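/- If d = 2, then the Gram matrix of the ideal M̃^(1) is not invertible and the corresponding generators vanish: Ĝ^(1)_{[AA][kl]} = 0 and Ĝ^(1)_{[kl][AA]} = 0 for all k,l ∈ {S,A}; equivalently, (E_A⊗E_A) Q^(1) = 0 and Q^(1) (E_A⊗E_A) = 0 when d = 2. -/

import Mathlib

open Matrix Kronecker

namespace WBA

/-- Configurations of `p` qudits of local dimension `d`. -/
abbrev Conf (d p : ℕ) := Fin p → Fin d

/-- Operators on `H = (ℂ^d)^{⊗ 2p}`, indexed by pairs (unprimed configuration, primed
configuration). -/
abbrev Op (d p : ℕ) := Matrix (Conf d p × Conf d p) (Conf d p × Conf d p) ℂ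

/-- The projector `P⁺_{a,c'}` onto the maximally entangled state between unprimed system `a`
and primed system `c`, tensored with the identity elsewhere. -/
noncomputable def Pplus (d p : ℕ) (a c : Fin p) : Op d p :=
  Matrix.of fun xy uv =>
    if xy.1 a = xy.2 c ∧ uv.1 a = uv.2 c ∧ (∀ j, j ≠ a → xy.1 j = uv.1 j) ∧
        (∀ j, j ≠ c → xy.2 j = uv.2 j) then
      (d : ℂ)⁻¹
    else 0

/-- `d • P⁺_{a,c'}`, i.e. the partially transposed swap `V^{t_{c'}}_{(a,c')}`. -/
noncomputable def arc (d p : ℕ) (a c : Fin p) : Op d p := (d : ℂ) • Pplus d p a c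

/-- `V^(k) = ∏_{j=p-k+1}^{p} (d • P⁺_{j,j'})` (product over the last `k` systems;
`V^(0) = 1`). -/
noncomputable def Vop (d p k : ℕ) : Op d p :=
  (((List.range p).filter (fun j => decide (p - k ≤ j))).map
    (fun j => if h : j < p then arc d p ⟨j, h⟩ ⟨j, h⟩ else 1)).prod

/-- `Q^(p) = d^{-p} V^(p)` and `Q^(k) = d^{-k} V^(k) - d^{-(k+1)} V^(k+1)` for `k < p`. -/
noncomputable def Qop (d p k : ℕ) : Op d p :=
  if k = p then ((d : ℂ) ^ p)⁻¹ • Vop d p p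
  else ((d : ℂ) ^ k)⁻¹ • Vop d p k - ((d : ℂ) ^ (k + 1))⁻¹ • Vop d p (k + 1)

/-- Permutation matrix on `(ℂ^d)^{⊗ n}`: sends `e_v` to `e_{v ∘ σ⁻¹}`. -/
noncomputable def permMat (d n : ℕ) (σ : Equiv.Perm (Fin n)) :
    Matrix (Fin n → Fin d) (Fin n → Fin d) ℂ :=
  Matrix.of fun x u => if x = u ∘ ⇑σ⁻¹ then 1 else 0

/-- `V_σ`: permutation of the unprimed factors, identity on the primed factors. -/
noncomputable def VL (d p : ℕ) (σ : Equiv.Perm (Fin p)) : Op d p :=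
  (permMat d p σ) ⊗ₖ (1 : Matrix (Conf d p) (Conf d p) ℂ)

/-- `V'_τ`: permutation of the primed factors, identity on the unprimed factors. -/
noncomputable def VR (d p : ℕ) (τ : Equiv.Perm (Fin p)) : Op d p :=
  (1 : Matrix (Conf d p) (Conf d p) ℂ) ⊗ₖ (permMat d p τ)

/-- Identification of `H` with `(ℂ^d)^{⊗ (p+p)}`. -/
def glue (d p : ℕ) : (Conf d p × Conf d p) ≃ (Fin (p + p) → Fin d) :=
  (Equiv.sumArrowEquivProdArrow (Fin p) (Fin p) (Fin d)).symm.trans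
    (Equiv.arrowCongr finSumFinEquiv (Equiv.refl (Fin d)))

/-- The permutation operator `W_π`, `π ∈ S_{2p}`, permuting all `2p` tensor factors of `H`. -/
noncomputable def Wfull (d p : ℕ) (π : Equiv.Perm (Fin (p + p))) : Op d p :=
  (permMat d (p + p) π).submatrix (glue d p) (glue d p)

/-- Partial transpose over the `p` primed factors:
`⟨x,y|M^Γ|u,v⟩ = ⟨x,v|M|u,y⟩`. -/
noncomputable def ptrans (d p : ℕ) (M : Op d p) : Op d p :=
  Matrix.of fun xy uv => M (xy.1, uv.2) (uv.1, xy.2)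

/-- The algebra `A^d_{p,p}` of partially transposed permutation operators, as a
linear subspace of `End(H)`. -/
noncomputable def Apt (d p : ℕ) : Submodule ℂ (Op d p) :=
  Submodule.span ℂ {M | ∃ π : Equiv.Perm (Fin (p + p)), M = ptrans d p (Wfull d p π)}

/-- Extension of an operator on systems `1,…,p-r,1',…,(p-r)'` by the identity on the
remaining systems. -/
noncomputable def embed (d p r : ℕ) (M : Op d (p - r)) : Op d p :=
  Matrix.of fun xy uv =>
    M (xy.1 ∘ Fin.castLE (Nat.sub_le p r), xy.2 ∘ Fin.castLE (Nat.sub_le p r))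
      (uv.1 ∘ Fin.castLE (Nat.sub_le p r), uv.2 ∘ Fin.castLE (Nat.sub_le p r)) *
    (if ∀ j : Fin p, p - r ≤ (j : ℕ) → xy.1 j = uv.1 j ∧ xy.2 j = uv.2 j then 1 else 0)

/-- The ideal `M̃^(k) = span{ V_σ V'_τ Q^(k) V_π V'_ρ }` of `A^d_{p,p}`. -/
noncomputable def Mtil (d p k : ℕ) : Submodule ℂ (Op d p) :=
  Submodule.span ℂ {M | ∃ σ τ π ρ : Equiv.Perm (Fin p),
    M = VL d p σ * VR d p τ * Qop d p k * (VL d p π * VR d p ρ)}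

/-- Labels for the two irreps of `S_2`: symmetric `S` and antisymmetric `A`. -/
inductive SA
  | S
  | A
deriving DecidableEq

instance instFintypeSA : Fintype SA :=
  ⟨{SA.S, SA.A}, fun x => by cases x <;> simp⟩

/-- The swap operator on `ℂ^d ⊗ ℂ^d`. -/
noncomputable def Fsw (d : ℕ) : Matrix (Conf d 2) (Conf d 2) ℂ :=
  Matrix.of fun x u => if x 0 = u 1 ∧ x 1 = u 0 then 1 else 0

/-- Symmetric and antisymmetric projectors on `ℂ^d ⊗ ℂ^d`. -/
noncomputable def Esm (d : ℕ) : SA → Matrix (Conf d 2) (Conf d 2) ℂ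
  | SA.S => (2 : ℂ)⁻¹ • (1 + Fsw d)
  | SA.A => (2 : ℂ)⁻¹ • (1 - Fsw d)

/-- `E_i ⊗ E_j` on `H = (ℂ^d)^{⊗4}`. -/
noncomputable def EE (d : ℕ) (i j : SA) : Op d 2 := (Esm d i) ⊗ₖ (Esm d j)

/-- `E_i ⊗ 1` on `H = (ℂ^d)^{⊗4}`. -/
noncomputable def EId (d : ℕ) (i : SA) : Op d 2 :=
  (Esm d i) ⊗ₖ (1 : Matrix (Conf d 2) (Conf d 2) ℂ)

/-- Multiplicities `m_S = d(d+1)/2`, `m_A = d(d-1)/2` (real valued). -/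
noncomputable def mR (d : ℕ) : SA → ℝ
  | SA.S => (d : ℝ) * ((d : ℝ) + 1) / 2
  | SA.A => (d : ℝ) * ((d : ℝ) - 1) / 2

/-- Multiplicities `m_S = d(d+1)/2`, `m_A = d(d-1)/2` (complex valued). -/
noncomputable def mC (d : ℕ) : SA → ℂ
  | SA.S => (d : ℂ) * ((d : ℂ) + 1) / 2
  | SA.A => (d : ℂ) * ((d : ℂ) - 1) / 2

/-- `V^(1) = d • P⁺_{2,2'}` for `p = 2`. -/
noncomputable def V1 (d : ℕ) : Op d 2 := arc d 2 1 1

/-- `V^(2) = d² • P⁺_{2,2'} P⁺_{1,1'}` for `p = 2`. -/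
noncomputable def V2 (d : ℕ) : Op d 2 := arc d 2 1 1 * arc d 2 0 0

/-- `Q^(2) = d^{-2} V^(2)` for `p = 2`. -/
noncomputable def Q2 (d : ℕ) : Op d 2 := ((d : ℂ) ^ 2)⁻¹ • V2 d

/-- `Q^(1) = d^{-1} V^(1) - d^{-2} V^(2)` for `p = 2`. -/
noncomputable def Q1 (d : ℕ) : Op d 2 :=
  (d : ℂ)⁻¹ • V1 d - ((d : ℂ) ^ 2)⁻¹ • V2 d

/-- `G^(2)_{kl} = (d²/√(m_k m_l)) (E_k ⊗ 1) Q^(2) (E_l ⊗ 1)`. -/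
noncomputable def G2 (d : ℕ) (k l : SA) : Op d 2 :=
  ((d : ℂ) ^ 2 / ((Real.sqrt (mR d k * mR d l) : ℝ) : ℂ)) • (EId d k * Q2 d * EId d l)

/-- `G^(2) = G^(2)_{SS} + G^(2)_{AA}`. -/
noncomputable def G2sum (d : ℕ) : Op d 2 := G2 d SA.S SA.S + G2 d SA.A SA.A

/-- The Gram coefficients `b_{SS} = (d+2)/(4d)`, `b_{SA} = b_{AS} = 1/4`,
`b_{AA} = (d-2)/(4d)`. -/
noncomputable def bc (d : ℕ) : SA → SA → ℂ
  | SA.S, SA.S => ((d : ℂ) + 2) / (4 * (d : ℂ))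
  | SA.S, SA.A => 1 / 4
  | SA.A, SA.S => 1 / 4
  | SA.A, SA.A => ((d : ℂ) - 2) / (4 * (d : ℂ))

/-- `Ĝ^(1)_{[ij][kl]} = (E_i ⊗ E_j) Q^(1) (E_k ⊗ E_l)`. -/
noncomputable def Ghat1 (d : ℕ) (i j k l : SA) : Op d 2 :=
  EE d i j * Q1 d * EE d k l

/-- `G^(1)_{[ij][kl]} = b_{ij}⁻¹ Ĝ^(1)_{[ij][kl]}`. -/
noncomputable def G1 (d : ℕ) (i j k l : SA) : Op d 2 := (bc d i j)⁻¹ • Ghat1 d i j k l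

/-- `G^(1) = Σ_{ij} G^(1)_{[ij][ij]}`. -/
noncomputable def G1sum (d : ℕ) : Op d 2 := ∑ i : SA, ∑ j : SA, G1 d i j i j

/-- `G^(0)_{ij} = E_i⊗E_j - b_{ij}⁻¹ (E_i⊗E_j)Q^(1)(E_i⊗E_j)
- δ_{ij} (d²/m_i) (E_i⊗1)Q^(2)(E_i⊗1)`. -/
noncomputable def G0 (d : ℕ) (i j : SA) : Op d 2 :=
  EE d i j - (bc d i j)⁻¹ • (EE d i j * Q1 d * EE d i j) -
    (if i = j then (d : ℂ) ^ 2 / mC d i else 0) • (EId d i * Q2 d * EId d i)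


/-!
For `d = 2` the antisymmetric projector has rank one, `E_A = ½ |σ⟩⟨σ|` with `σ = |01⟩ - |10⟩`
built from the Levi-Civita symbol `ε`, so `E_A ⊗ E_A = ¼ |σσ⟩⟨σσ|` and it suffices to show
`⟨σσ| Q^(1) = 0` and `Q^(1) |σσ⟩ = 0`. Contracting system `2` with `2'` in `σ ⊗ σ` gives
`∑_c ε_{ac} ε_{a'c} = δ_{aa'}`, so `⟨σσ| V^(1) = ⟨Ω|` with `Ω = ∑ₓ |x⟩|x⟩` the unnormalised maximally
entangled vector between unprimed and primed systems; since `⟨Ω| d P⁺_{1,1'} = d ⟨Ω|`, also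
`⟨σσ| V^(2) = 2 ⟨Ω|`, and `⟨σσ| Q^(1) = ½ ⟨Ω| - ¼ · 2 ⟨Ω| = 0`. Every `d P⁺_{a,a'}` is a symmetric
matrix, which gives the column version in the same way.
-/

open Function

lemma eq_iff_apply_eq_and_forall_ne {α β : Type*} [DecidableEq α] {f g : α → β} (a : α) :
    f = g ↔ f a = g a ∧ ∀ j ≠ a, f j = g j := by
  refine ⟨fun h => h ▸ ⟨rfl, fun _ _ => rfl⟩, fun ⟨ha, h⟩ => funext fun j => ?_⟩
  by_cases hj : j = a
  · exact hj ▸ ha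
  · exact h j hj

lemma arc_transpose (d p : ℕ) (a c : Fin p) : (arc d p a c)ᵀ = arc d p a c := by
  ext xy uv
  simp only [transpose_apply, arc, Pplus, Matrix.smul_apply, of_apply]
  refine congrArg _ (if_congr ?_ rfl rfl)
  constructor <;> rintro ⟨h₁, h₂, h₃, h₄⟩ <;>
    exact ⟨h₂, h₁, fun j hj => (h₃ j hj).symm, fun j hj => (h₄ j hj).symm⟩

lemma arc_mulVec {d p : ℕ} (a c : Fin p) (w : Conf d p × Conf d p → ℂ) :
    arc d p a c *ᵥ w = w ᵥ* arc d p a c := by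
  rw [← vecMul_transpose, arc_transpose]

lemma arc_apply_eq_sum {d p : ℕ} (hd : d ≠ 0) (a c : Fin p) (xy : Conf d p × Conf d p)
    (u v : Conf d p) :
    arc d p a c xy (u, v) =
      if u a = v c then ∑ e, if xy = (update u a e, update v c e) then 1 else 0 else 0 := by
  have hd' : (d : ℂ) ≠ 0 := Nat.cast_ne_zero.mpr hd
  obtain ⟨x, y⟩ := xy
  have hsum : (∑ e, if (x, y) = (update u a e, update v c e) then (1 : ℂ) else 0) =
      if (x, y) = (update u a (x a), update v c (x a)) then 1 else 0 := by
    refine Finset.sum_eq_single (x a) (fun e _ he => if_neg fun h => he ?_) (by simp)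
    obtain ⟨rfl, -⟩ := Prod.mk.inj h
    simp
  rw [hsum]
  simp only [arc, Pplus, Matrix.smul_apply, of_apply, smul_eq_mul, mul_ite, mul_zero,
    mul_inv_cancel₀ hd', Prod.mk.injEq, eq_update_iff]
  by_cases h : u a = v c
  · simp only [h, true_and, if_true, eq_comm (a := y c), and_left_comm]
  · simp only [h, false_and, and_false, if_false]

lemma vecMul_arc_apply {d p : ℕ} (hd : d ≠ 0) (a c : Fin p) (w : Conf d p × Conf d p → ℂ)
    (u v : Conf d p) :
    (w ᵥ* arc d p a c) (u, v) = if u a = v c then ∑ e, w (update u a e, update v c e) else 0 := by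
  simp only [vecMul, dotProduct, arc_apply_eq_sum hd, mul_ite, mul_zero, Finset.mul_sum, mul_one]
  split_ifs
  · rw [Finset.sum_comm]
    simp
  · simp

/-- The unnormalised maximally entangled vector `∑ₓ |x⟩|x⟩` between the unprimed and the primed
systems. -/
def maxEntangled (d p : ℕ) (xy : Conf d p × Conf d p) : ℂ := if xy.1 = xy.2 then 1 else 0

lemma maxEntangled_vecMul_arc {d p : ℕ} (hd : d ≠ 0) (a : Fin p) :
    maxEntangled d p ᵥ* arc d p a a = (d : ℂ) • maxEntangled d p := by
  ext ⟨u, v⟩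
  have hupd : ∀ e, update u a e = update v a e ↔ ∀ j ≠ a, u j = v j := fun e => by
    rw [eq_iff_apply_eq_and_forall_ne a]
    simp +contextual [update_of_ne]
  simp only [vecMul_arc_apply hd, maxEntangled, hupd, Finset.sum_ite_irrel, Finset.sum_const,
    Finset.card_univ, Fintype.card_fin, nsmul_eq_mul, mul_one, Pi.smul_apply, smul_eq_mul,
    mul_ite, mul_zero, eq_iff_apply_eq_and_forall_ne (f := u) a, ite_and]

def leviCivita : Matrix (Fin 2) (Fin 2) ℂ := !![0, 1; -1, 0]

lemma leviCivita_mul_transpose : leviCivita * leviCivitaᵀ = 1 := by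
  ext i j
  fin_cases i <;> fin_cases j <;> simp [leviCivita, mul_apply]

lemma leviCivita_transpose_mul : leviCivitaᵀ * leviCivita = 1 := by
  ext i j
  fin_cases i <;> fin_cases j <;> simp [leviCivita, mul_apply]

/-- The unnormalised singlet `|01⟩ - |10⟩` on `ℂ² ⊗ ℂ²`. -/
def singlet (x : Conf 2 2) : ℂ := leviCivita (x 0) (x 1)

def singletPair (xy : Conf 2 2 × Conf 2 2) : ℂ := singlet xy.1 * singlet xy.2

lemma Esm_two_A : Esm 2 SA.A = (2 : ℂ)⁻¹ • vecMulVec singlet singlet := by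
  ext x u
  obtain ⟨a, b, rfl⟩ : ∃ a b, x = ![a, b] := ⟨x 0, x 1, by ext i; fin_cases i <;> rfl⟩
  obtain ⟨c, e, rfl⟩ : ∃ c e, u = ![c, e] := ⟨u 0, u 1, by ext i; fin_cases i <;> rfl⟩
  fin_cases a <;> fin_cases b <;> fin_cases c <;> fin_cases e <;>
    simp [Esm, Fsw, singlet, leviCivita, one_apply, funext_iff, Fin.forall_fin_two,
      vecMulVec_apply]

lemma EE_two_A_A : EE 2 SA.A SA.A = (4 : ℂ)⁻¹ • vecMulVec singletPair singletPair := by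
  ext ⟨x, y⟩ ⟨u, v⟩
  simp only [EE, kroneckerMap_apply, Esm_two_A, Matrix.smul_apply, vecMulVec_apply, singletPair,
    smul_eq_mul]
  ring

lemma singletPair_vecMul_arc (j : Fin 2) : singletPair ᵥ* arc 2 2 j j = maxEntangled 2 2 := by
  ext ⟨u, v⟩
  simp only [vecMul_arc_apply two_ne_zero, maxEntangled,
    eq_iff_apply_eq_and_forall_ne (f := u) j, ite_and]
  refine if_congr Iff.rfl ?_ rfl
  fin_cases j
  · simpa [singletPair, singlet, mul_apply, one_apply, Fin.forall_fin_two] using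
      congrFun₂ leviCivita_transpose_mul (u 1) (v 1)
  · simpa [singletPair, singlet, mul_apply, one_apply, Fin.forall_fin_two] using
      congrFun₂ leviCivita_mul_transpose (u 0) (v 0)

lemma singletPair_vecMul_Q1 : singletPair ᵥ* Q1 2 = 0 := by
  simp only [Q1, V1, V2, vecMul_sub, vecMul_smul, ← vecMul_vecMul, singletPair_vecMul_arc,
    maxEntangled_vecMul_arc two_ne_zero, smul_smul]
  norm_num

lemma Q1_mulVec_singletPair : Q1 2 *ᵥ singletPair = 0 := by
  simp only [Q1, V1, V2, sub_mulVec, smul_mulVec, ← mulVec_mulVec, arc_mulVec,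
    singletPair_vecMul_arc, maxEntangled_vecMul_arc two_ne_zero, smul_smul]
  norm_num

lemma EE_two_A_A_mul_Q1 : EE 2 SA.A SA.A * Q1 2 = 0 := by
  rw [EE_two_A_A, smul_mul_assoc, vecMulVec_mul, singletPair_vecMul_Q1, vecMulVec_zero, smul_zero]

lemma Q1_mul_EE_two_A_A : Q1 2 * EE 2 SA.A SA.A = 0 := by
  rw [EE_two_A_A, mul_smul_comm, mul_vecMulVec, Q1_mulVec_singletPair, zero_vecMulVec, smul_zero]

/-- for `d = 2` the Gram matrix of `M̃^(1)` is not invertible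
(`b_{AA} = 0`) and the corresponding generators vanish:
`Ĝ^(1)_{[AA][kl]} = 0 = Ĝ^(1)_{[kl][AA]}`; equivalently `(E_A⊗E_A) Q^(1) = 0` and
`Q^(1) (E_A⊗E_A) = 0`. -/
theorem Ghat1_degenerate_d2 :
    bc 2 SA.A SA.A = 0 ∧
    (∀ k l : SA, Ghat1 2 SA.A SA.A k l = 0 ∧ Ghat1 2 k l SA.A SA.A = 0) ∧
    EE 2 SA.A SA.A * Q1 2 = 0 ∧ Q1 2 * EE 2 SA.A SA.A = 0 := by
  refine ⟨by norm_num [bc], fun k l => ⟨?_, ?_⟩, EE_two_A_A_mul_Q1, Q1_mul_EE_two_A_A⟩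
  · rw [Ghat1, EE_two_A_A_mul_Q1, zero_mul]
  · rw [Ghat1, mul_assoc, Q1_mul_EE_two_A_A, mul_zero]

end WBA
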